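/- Let U be an n×n complex unitary matrix with spectral decomposition U = Σ_r e^{iθ_r} F_r, and let x, y be unit vectors in ℂⁿ. Then pretty good state transfer occurs from x to y if and only if both: (i) x and y are strongly cospectral, i.e., for each r there is μ_r ∈ ℂ with |μ_r| = 1 and F_r x = μ_r F_r y; and (ii) there exists γ ∈ ℂ with |γ| = 1 such that for every ε > 0 there is t ∈ ℤ with |e^{itθ_r} μ_r − γ| < ε for every r in the eigenvalue support Θ_x = {r : F_r x ≠ 0}. -/

import Mathlib

open Matrix Complex Finset

/-- The Euclidean norm of a vector in `ℂⁿ`. -/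
noncomputable def euclNorm {ι : Type*} [Fintype ι] (v : ι → ℂ) : ℝ :=
  Real.sqrt (∑ i, ‖v i‖ ^ 2)

/-- The Euclidean inner product `⟨v, w⟩ = ∑ᵢ vᵢ conj(wᵢ)` on `ℂⁿ`. -/
noncomputable def euclInner {ι : Type*} [Fintype ι] (v w : ι → ℂ) : ℂ :=
  ∑ i, v i * star (w i)

/-- Pretty good state transfer from `x` to `y` under the unitary `U`. -/
def PGST {ι : Type*} [Fintype ι] [DecidableEq ι] (U : Matrix ι ι ℂ) (x y : ι → ℂ) : Prop :=
  ∃ γ : ℂ, ‖γ‖ = 1 ∧ ∀ ε > 0, ∃ t : ℤ, euclNorm ((U ^ t).mulVec x - γ • y) < ε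

/-! Write `x_r = F_r x` and `y_r = F_r y`. Since `U^t = ∑ e^{itθ_r} F_r` and the ranges of the
`F_r` are mutually orthogonal, Pythagoras gives `‖U^t x - γ y‖² = ∑_r ‖e^{itθ_r} x_r - γ y_r‖²`.
If this becomes arbitrarily small, each `x_r` is a limit of unimodular multiples of `y_r`; the unit
circle is compact, so `x_r = μ_r y_r` with `|μ_r| = 1`. The `r`-th summand is then
`|e^{itθ_r} μ_r - γ|² ‖y_r‖²`, and since the finitely many nonzero weights `‖y_r‖ = ‖x_r‖` are
bounded away from `0`, the sum is small exactly when every phase with `x_r ≠ 0` is close to `γ`. -/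

namespace StateTransfer

section Powers

variable {K A ι : Type*} [Field K] [Ring A] [Algebra K A] [Fintype ι] {F : ι → A}

theorem sum_smul_mul_sum_smul (hidem : ∀ r, F r * F r = F r)
    (horth : ∀ r s, r ≠ s → F r * F s = 0) (a b : ι → K) :
    (∑ r, a r • F r) * (∑ r, b r • F r) = ∑ r, (a r * b r) • F r := by
  simp_rw [Finset.sum_mul, Finset.mul_sum, smul_mul_smul_comm]
  refine Finset.sum_congr rfl fun r _ => ?_
  rw [Finset.sum_eq_single r (fun s _ hs => by rw [horth r s hs.symm, smul_zero]) (by simp),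
    hidem]

theorem sum_smul_pow (hidem : ∀ r, F r * F r = F r) (horth : ∀ r s, r ≠ s → F r * F s = 0)
    (hsum : ∑ r, F r = 1) (c : ι → K) (k : ℕ) :
    (∑ r, c r • F r) ^ k = ∑ r, c r ^ k • F r := by
  induction k with
  | zero => simpa using hsum.symm
  | succ k ih => simp_rw [pow_succ, ih, sum_smul_mul_sum_smul hidem horth]

end Powers

theorem sum_smul_zpow {K m ι : Type*} [Field K] [Fintype m] [DecidableEq m] [Fintype ι]
    {F : ι → Matrix m m K} (hidem : ∀ r, F r * F r = F r)
    (horth : ∀ r s, r ≠ s → F r * F s = 0) (hsum : ∑ r, F r = 1)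
    {c : ι → K} (hc : ∀ r, c r ≠ 0) (t : ℤ) :
    (∑ r, c r • F r) ^ t = ∑ r, c r ^ t • F r := by
  cases t with
  | ofNat k => simpa using sum_smul_pow hidem horth hsum c k
  | negSucc k =>
    simp_rw [zpow_negSucc, sum_smul_pow hidem horth hsum c]
    refine Matrix.inv_eq_left_inv ?_
    simp_rw [sum_smul_mul_sum_smul hidem horth, inv_mul_cancel₀ (pow_ne_zero _ (hc _)), one_smul,
      hsum]

theorem zpow_sum_exp_smul {m ι : Type*} [Fintype m] [DecidableEq m] [Fintype ι]
    {F : ι → Matrix m m ℂ} (hidem : ∀ r, F r * F r = F r)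
    (horth : ∀ r s, r ≠ s → F r * F s = 0) (hsum : ∑ r, F r = 1) (θ : ι → ℝ) (t : ℤ) :
    (∑ r, Complex.exp (θ r * Complex.I) • F r) ^ t =
      ∑ r, Complex.exp (t * θ r * Complex.I) • F r := by
  simp_rw [sum_smul_zpow hidem horth hsum (fun r => Complex.exp_ne_zero _), mul_assoc,
    Complex.exp_int_mul]

theorem exists_norm_eq_one_eq_smul_of_approx {𝕜 E : Type*} [RCLike 𝕜] [NormedAddCommGroup E]
    [NormedSpace 𝕜 E] {a b : E} (h : ∀ ε > 0, ∃ c : 𝕜, ‖c‖ = 1 ∧ ‖a - c • b‖ < ε) :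
    ∃ μ : 𝕜, ‖μ‖ = 1 ∧ a = μ • b := by
  have hK : IsClosed ((· • b) '' Metric.sphere (0 : 𝕜) 1) :=
    ((isCompact_sphere 0 1).image (continuous_id.smul continuous_const)).isClosed
  have ha : a ∈ closure ((· • b) '' Metric.sphere (0 : 𝕜) 1) := by
    refine Metric.mem_closure_iff.2 fun ε hε => ?_
    obtain ⟨c, hc, hlt⟩ := h ε hε
    exact ⟨c • b, ⟨c, by simpa using hc, rfl⟩, by rwa [dist_eq_norm]⟩
  obtain ⟨μ, hμ, rfl⟩ := hK.closure_eq ▸ ha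
  exact ⟨μ, by simpa using hμ, rfl⟩

theorem exists_pos_le_of_pos {ι : Type*} [Fintype ι] (w : ι → ℝ) :
    ∃ m > 0, ∀ r, 0 < w r → m ≤ w r := by
  classical
  let S := insert 1 ((univ.filter (0 < w ·)).image w)
  refine ⟨S.min' (insert_nonempty _ _), (Finset.lt_min'_iff _ _).2 ?_, fun r hr => ?_⟩
  · simp only [S, mem_insert, mem_image, mem_filter, mem_univ, true_and]
    rintro _ (rfl | ⟨r, hr, rfl⟩)
    exacts [one_pos, hr]
  · exact Finset.min'_le _ _ (mem_insert_of_mem (mem_image_of_mem _ (by simpa using hr)))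

theorem smul_sub_smul_eq_of_eq_smul {𝕜 E : Type*} [Field 𝕜] [AddCommGroup E] [Module 𝕜 E]
    {a b : E} {μ : 𝕜} (h : a = μ • b) (c γ : 𝕜) : c • a - γ • b = (c * μ - γ) • b := by
  rw [h, smul_smul, sub_smul]

section Spectral

variable {𝕜 E ι : Type*} [RCLike 𝕜] [NormedAddCommGroup E] [InnerProductSpace 𝕜 E]
  {P : ι → E →ₗ[𝕜] E}

open scoped InnerProductSpace

theorem inner_apply_apply_eq_zero (hsymm : ∀ r, (P r).IsSymmetric)
    (horth : ∀ r s, r ≠ s → P r ∘ₗ P s = 0) {r s : ι} (hrs : r ≠ s) (u v : E) :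
    ⟪P r u, P s v⟫_𝕜 = 0 := by
  rw [hsymm r, ← LinearMap.comp_apply, horth r s hrs, LinearMap.zero_apply, inner_zero_right]

theorem norm_apply_eq_of_strongly_cospectral {μ : ι → 𝕜} {x y : E}
    (hμ : ∀ r, ‖μ r‖ = 1 ∧ P r x = μ r • P r y) (r : ι) : ‖P r x‖ = ‖P r y‖ := by
  rw [(hμ r).2, norm_smul, (hμ r).1, one_mul]

variable [Fintype ι]

theorem norm_sum_apply_sq (hsymm : ∀ r, (P r).IsSymmetric)
    (horth : ∀ r s, r ≠ s → P r ∘ₗ P s = 0) (u : ι → E) :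
    ‖∑ r, P r (u r)‖ ^ 2 = ∑ r, ‖P r (u r)‖ ^ 2 := by
  have h : ⟪∑ r, P r (u r), ∑ r, P r (u r)⟫_𝕜 = ∑ r, ⟪P r (u r), P r (u r)⟫_𝕜 := by
    simp_rw [sum_inner, inner_sum]
    refine Finset.sum_congr rfl fun r _ => Finset.sum_eq_single r (fun s _ hs => ?_) (by simp)
    exact inner_apply_apply_eq_zero hsymm horth (Ne.symm hs) _ _
  simp_rw [inner_self_eq_norm_sq_to_K] at h
  exact_mod_cast h

theorem norm_sq_eq_sum_norm_apply_sq (hsymm : ∀ r, (P r).IsSymmetric)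
    (horth : ∀ r s, r ≠ s → P r ∘ₗ P s = 0) (hsum : ∑ r, P r = LinearMap.id) (y : E) :
    ‖y‖ ^ 2 = ∑ r, ‖P r y‖ ^ 2 := by
  simpa [← LinearMap.sum_apply, hsum] using norm_sum_apply_sq hsymm horth fun _ => y

theorem norm_sum_smul_apply_sub_smul_sq (hsymm : ∀ r, (P r).IsSymmetric)
    (horth : ∀ r s, r ≠ s → P r ∘ₗ P s = 0) (hsum : ∑ r, P r = LinearMap.id)
    (c : ι → 𝕜) (γ : 𝕜) (x y : E) :
    ‖∑ r, c r • P r x - γ • y‖ ^ 2 = ∑ r, ‖c r • P r x - γ • P r y‖ ^ 2 := by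
  have h : ∑ r, c r • P r x - γ • y = ∑ r, P r (c r • x - γ • y) := by
    conv_lhs => rw [← LinearMap.id_apply (R := 𝕜) y, ← hsum]
    simp [Finset.smul_sum, Finset.sum_sub_distrib]
  rw [h, norm_sum_apply_sq hsymm horth]
  simp only [map_sub, map_smul]

theorem norm_smul_apply_sub_smul_le (hsymm : ∀ r, (P r).IsSymmetric)
    (horth : ∀ r s, r ≠ s → P r ∘ₗ P s = 0) (hsum : ∑ r, P r = LinearMap.id)
    (c : ι → 𝕜) (γ : 𝕜) (x y : E) (r : ι) :
    ‖c r • P r x - γ • P r y‖ ≤ ‖∑ r, c r • P r x - γ • y‖ := by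
  refine (pow_le_pow_iff_left₀ (norm_nonneg _) (norm_nonneg _) two_ne_zero).1 ?_
  rw [norm_sum_smul_apply_sub_smul_sq hsymm horth hsum]
  exact Finset.single_le_sum (f := fun r => ‖c r • P r x - γ • P r y‖ ^ 2)
    (fun _ _ => sq_nonneg _) (mem_univ r)

variable {T : Type*} {c : T → ι → 𝕜} {γ : 𝕜} {x y : E}

theorem exists_strongly_cospectral_of_approx (hsymm : ∀ r, (P r).IsSymmetric)
    (horth : ∀ r s, r ≠ s → P r ∘ₗ P s = 0) (hsum : ∑ r, P r = LinearMap.id)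
    (hc : ∀ t r, ‖c t r‖ = 1) (hγ : ‖γ‖ = 1)
    (h : ∀ ε > 0, ∃ t, ‖∑ r, c t r • P r x - γ • y‖ < ε) :
    ∃ μ : ι → 𝕜, ∀ r, ‖μ r‖ = 1 ∧ P r x = μ r • P r y := by
  refine Classical.skolem.1 fun r => exists_norm_eq_one_eq_smul_of_approx fun ε hε => ?_
  obtain ⟨t, ht⟩ := h ε hε
  have hct : c t r ≠ 0 := norm_ne_zero_iff.1 (by rw [hc t r]; exact one_ne_zero)
  refine ⟨(c t r)⁻¹ * γ, by rw [norm_mul, norm_inv, hc t r, hγ, inv_one, one_mul], ?_⟩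
  have hrot : c t r • (P r x - ((c t r)⁻¹ * γ) • P r y) = c t r • P r x - γ • P r y := by
    rw [smul_sub, smul_smul, mul_inv_cancel_left₀ hct]
  calc ‖P r x - ((c t r)⁻¹ * γ) • P r y‖ = ‖c t r • P r x - γ • P r y‖ := by
        rw [← hrot, norm_smul, hc t r, one_mul]
    _ ≤ ‖∑ r, c t r • P r x - γ • y‖ := norm_smul_apply_sub_smul_le hsymm horth hsum _ _ _ _ r
    _ < ε := ht

variable {μ : ι → 𝕜}

theorem phases_approx_of_approx (hsymm : ∀ r, (P r).IsSymmetric)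
    (horth : ∀ r s, r ≠ s → P r ∘ₗ P s = 0) (hsum : ∑ r, P r = LinearMap.id)
    (hμ : ∀ r, ‖μ r‖ = 1 ∧ P r x = μ r • P r y)
    (h : ∀ ε > 0, ∃ t, ‖∑ r, c t r • P r x - γ • y‖ < ε) :
    ∀ ε > 0, ∃ t, ∀ r, P r x ≠ 0 → ‖c t r * μ r - γ‖ < ε := by
  obtain ⟨m, hm, hmle⟩ := exists_pos_le_of_pos fun r => ‖P r x‖
  intro ε hε
  obtain ⟨t, ht⟩ := h (ε * m) (by positivity)
  refine ⟨t, fun r hr => lt_of_mul_lt_mul_right ?_ hm.le⟩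
  calc ‖c t r * μ r - γ‖ * m ≤ ‖c t r * μ r - γ‖ * ‖P r y‖ := by
        rw [← norm_apply_eq_of_strongly_cospectral hμ r]
        exact mul_le_mul_of_nonneg_left (hmle r (norm_pos_iff.2 hr)) (norm_nonneg _)
    _ = ‖c t r • P r x - γ • P r y‖ := by
        rw [smul_sub_smul_eq_of_eq_smul (hμ r).2, norm_smul]
    _ ≤ ‖∑ r, c t r • P r x - γ • y‖ := norm_smul_apply_sub_smul_le hsymm horth hsum _ _ _ _ r
    _ < ε * m := ht

theorem approx_of_phases_approx (hsymm : ∀ r, (P r).IsSymmetric)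
    (horth : ∀ r s, r ≠ s → P r ∘ₗ P s = 0) (hsum : ∑ r, P r = LinearMap.id)
    (hμ : ∀ r, ‖μ r‖ = 1 ∧ P r x = μ r • P r y)
    (h : ∀ ε > 0, ∃ t, ∀ r, P r x ≠ 0 → ‖c t r * μ r - γ‖ < ε) :
    ∀ ε > 0, ∃ t, ‖∑ r, c t r • P r x - γ • y‖ < ε := by
  intro ε hε
  set δ := ε / (‖y‖ + 1)
  obtain ⟨t, ht⟩ := h δ (by positivity)
  refine ⟨t, ?_⟩
  have hterm : ∀ r, ‖c t r • P r x - γ • P r y‖ ^ 2 ≤ δ ^ 2 * ‖P r y‖ ^ 2 := by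
    intro r
    rw [smul_sub_smul_eq_of_eq_smul (hμ r).2, norm_smul, mul_pow]
    by_cases hr : P r x = 0
    · rw [← norm_apply_eq_of_strongly_cospectral hμ r, hr, norm_zero]
      simp
    · gcongr
      exact (ht r hr).le
  have hsq : ‖∑ r, c t r • P r x - γ • y‖ ^ 2 ≤ (δ * ‖y‖) ^ 2 := by
    rw [norm_sum_smul_apply_sub_smul_sq hsymm horth hsum, mul_pow,
      norm_sq_eq_sum_norm_apply_sq hsymm horth hsum y, Finset.mul_sum]
    exact Finset.sum_le_sum fun r _ => hterm r
  calc ‖∑ r, c t r • P r x - γ • y‖ ≤ δ * ‖y‖ :=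
        (pow_le_pow_iff_left₀ (norm_nonneg _) (by positivity) two_ne_zero).1 hsq
    _ < ε := by
        rw [div_mul_eq_mul_div, div_lt_iff₀ (by positivity)]
        nlinarith [norm_nonneg y]

theorem exists_approx_iff (hsymm : ∀ r, (P r).IsSymmetric)
    (horth : ∀ r s, r ≠ s → P r ∘ₗ P s = 0) (hsum : ∑ r, P r = LinearMap.id)
    (hc : ∀ t r, ‖c t r‖ = 1) :
    (∃ γ : 𝕜, ‖γ‖ = 1 ∧ ∀ ε > 0, ∃ t, ‖∑ r, c t r • P r x - γ • y‖ < ε) ↔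
      ∃ μ : ι → 𝕜, (∀ r, ‖μ r‖ = 1 ∧ P r x = μ r • P r y) ∧
        ∃ γ : 𝕜, ‖γ‖ = 1 ∧ ∀ ε > 0, ∃ t, ∀ r, P r x ≠ 0 → ‖c t r * μ r - γ‖ < ε := by
  constructor
  · rintro ⟨γ, hγ, h⟩
    obtain ⟨μ, hμ⟩ := exists_strongly_cospectral_of_approx hsymm horth hsum hc hγ h
    exact ⟨μ, hμ, γ, hγ, phases_approx_of_approx hsymm horth hsum hμ h⟩
  · rintro ⟨μ, hμ, γ, hγ, h⟩
    exact ⟨γ, hγ, approx_of_phases_approx hsymm horth hsum hμ h⟩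

end Spectral

theorem euclNorm_eq_norm_toLp {m : Type*} [Fintype m] (v : m → ℂ) :
    euclNorm v = ‖WithLp.toLp 2 v‖ := by
  rw [EuclideanSpace.norm_eq]
  rfl

end StateTransfer

open StateTransfer

theorem stmt7_general {n : ℕ} {ι : Type*} [Fintype ι]
    (θ : ι → ℝ) (F : ι → Matrix (Fin n) (Fin n) ℂ)
    (hherm : ∀ r, (F r)ᴴ = F r)
    (hidem : ∀ r, F r * F r = F r)
    (horth : ∀ r s, r ≠ s → F r * F s = 0)
    (hsum : ∑ r, F r = 1)
    (U : Matrix (Fin n) (Fin n) ℂ)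
    (hU : U = ∑ r, Complex.exp (θ r * Complex.I) • F r)
    (x y : Fin n → ℂ) :
    PGST U x y ↔
      ∃ μ : ι → ℂ,
        (∀ r, ‖μ r‖ = 1 ∧ (F r).mulVec x = μ r • (F r).mulVec y) ∧
        ∃ γ : ℂ, ‖γ‖ = 1 ∧ ∀ ε > 0, ∃ t : ℤ, ∀ r, (F r).mulVec x ≠ 0 →
          ‖Complex.exp ((t : ℂ) * θ r * Complex.I) * μ r - γ‖ < ε := by
  let P r := toEuclideanLin (F r)
  have hsymm : ∀ r, (P r).IsSymmetric := fun r => isSymmetric_toEuclideanLin_iff.2 (hherm r)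
  have horth' : ∀ r s, r ≠ s → P r ∘ₗ P s = 0 := fun r s hrs => by
    rw [← toLpLin_mul_same, horth r s hrs, map_zero]
  have hsum' : ∑ r, P r = LinearMap.id := by rw [← map_sum, hsum, toLpLin_one]
  have hexp (t : ℤ) r : ‖Complex.exp (t * θ r * Complex.I)‖ = 1 := by
    rw [← Complex.ofReal_intCast, ← Complex.ofReal_mul, Complex.norm_exp_ofReal_mul_I]
  have happly r (v : Fin n → ℂ) : P r (WithLp.toLp 2 v) = WithLp.toLp 2 (F r *ᵥ v) := rfl
  have hres (t : ℤ) (γ : ℂ) : euclNorm ((U ^ t) *ᵥ x - γ • y) =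
      ‖∑ r, Complex.exp (t * θ r * Complex.I) • P r (WithLp.toLp 2 x) - γ • WithLp.toLp 2 y‖ := by
    simp only [euclNorm_eq_norm_toLp, hU, zpow_sum_exp_smul hidem horth hsum, Matrix.sum_mulVec, Matrix.smul_mulVec, happly,
      WithLp.toLp_sub, WithLp.toLp_smul, WithLp.toLp_sum]
  have hcospec r (μ : ℂ) :
      F r *ᵥ x = μ • F r *ᵥ y ↔ P r (WithLp.toLp 2 x) = μ • P r (WithLp.toLp 2 y) := by
    rw [happly, happly, ← WithLp.toLp_smul, (WithLp.toLp_injective 2).eq_iff]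
  have hsupp r : F r *ᵥ x ≠ 0 ↔ P r (WithLp.toLp 2 x) ≠ 0 := by
    rw [happly, ne_eq, ne_eq, WithLp.toLp_eq_zero]
  simp only [PGST, hres, hcospec, hsupp]
  exact exists_approx_iff hsymm horth' hsum' hexp

theorem stmt7 {n : ℕ} {ι : Type*} [Fintype ι]
    (θ : ι → ℝ) (F : ι → Matrix (Fin n) (Fin n) ℂ)
    (hdist : ∀ r s, Complex.exp (θ r * Complex.I) = Complex.exp (θ s * Complex.I) → r = s)
    (hherm : ∀ r, (F r)ᴴ = F r)
    (hidem : ∀ r, F r * F r = F r)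
    (horth : ∀ r s, r ≠ s → F r * F s = 0)
    (hsum : ∑ r, F r = 1)
    (U : Matrix (Fin n) (Fin n) ℂ)
    (hU : U = ∑ r, Complex.exp (θ r * Complex.I) • F r)
    (x y : Fin n → ℂ) (hx : euclNorm x = 1) (hy : euclNorm y = 1) :
    PGST U x y ↔
      ∃ μ : ι → ℂ,
        (∀ r, ‖μ r‖ = 1 ∧ (F r).mulVec x = μ r • (F r).mulVec y) ∧
        ∃ γ : ℂ, ‖γ‖ = 1 ∧ ∀ ε > 0, ∃ t : ℤ, ∀ r, (F r).mulVec x ≠ 0 →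
          ‖Complex.exp ((t : ℂ) * θ r * Complex.I) * μ r - γ‖ < ε :=
  stmt7_general θ F hherm hidem horth hsum U hU x y
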